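/- arXiv:2112.07073 — 2 statements merged into one kernel-verified Lean document; each statement's English description precedes it below -/
import Mathlib

section
/- Let λ ∈ [0, π/2) and let f be analytic on the open unit disk 𝔻 with f(0) = 0, f′(0) = 1, f(z) ≠ 0 for all z ∈ 𝔻 \ {0}, and f′(z) ≠ 0 for all z ∈ 𝔻. Suppose that for every z ∈ 𝔻 and every real number A with |A| ≥ sec λ · √(1 + 2 cos λ) − tan λ one has 1 + z f″(z)/f′(z) + (e^{−iλ} − 1)·z f′(z)/f(z) ≠ iA. Then Re(e^{−iλ} · z f′(z)/f(z)) > 0 for all z ∈ 𝔻. -/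
/-!
Put `p z = e^{-iλ} z f'(z) / f(z)`, analytic on `𝔻` with `Re p 0 = cos λ > 0`. If `Re p` is not
positive, let `z₀` be a point of least modulus with `Re p z₀ = 0`. The Cayley transform
`w = (p 0 - p) / (conj (p 0) + p)` maps the disk of radius `|z₀|` into the closed unit disk,
vanishes at `0` and has `|w z₀| = 1`, so by Jack's lemma `z₀ w'(z₀) = k w(z₀)` with `k ≥ 1`
(Schwarz's lemma gives `|w (t z₀)| ≤ t` along the radius, and `|w|` is maximal at `z₀` on the
circle).
Translated back, `p z₀ = iρ` and `z₀ p'(z₀) = σ` with `σ ≤ -|p 0 - iρ|² / (2 cos λ)`.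
Since `z p'/p = 1 + z f''/f' - z f'/f`, the expression `1 + z f''/f' + (e^{-iλ} - 1) z f'/f`
equals `i (ρ - σ/ρ)` at `z₀`, and AM-GM bounds `|ρ - σ/ρ|` below by `sec λ √(1 + 2 cos λ) - tan λ`.
-/

open Complex ComplexConjugate Metric Set Filter Topology

theorem HasDerivAt.nonneg_of_eventually_le_left {u : ℝ → ℝ} {d b : ℝ} (hu : HasDerivAt u d b)
    (hle : ∀ᶠ t in 𝓝[<] b, u t ≤ u b) : 0 ≤ d := by
  have hcone : (-1 : ℝ) ∈ posTangentConeAt (Iio b) b :=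
    mem_posTangentConeAt_of_frequently_mem <| Eventually.frequently <|
      eventually_mem_nhdsWithin.mono fun t (ht : 0 < t) => by simpa using ht
  simpa using IsLocalMaxOn.hasFDerivWithinAt_nonpos hle hu.hasFDerivAt.hasFDerivWithinAt hcone

theorem hasDerivAt_sq_norm_comp {w : ℂ → ℂ} {γ : ℝ → ℂ} {w' γ' : ℂ} {t : ℝ}
    (hγ : HasDerivAt γ γ' t) (hw : HasDerivAt w w' (γ t)) :
    HasDerivAt (fun s => ‖w (γ s)‖ ^ 2) (2 * (w' * γ' * conj (w (γ t))).re) t := by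
  simpa [Complex.inner] using (hw.comp t hγ).norm_sq

section Jack

variable {w : ℂ → ℂ} {z₀ : ℂ}

theorem sq_norm_le_re_mul_deriv_mul_conj (hw : DifferentiableOn ℂ w (ball 0 ‖z₀‖)) (hw₀ : w 0 = 0)
    (hmax : IsMaxOn (‖w ·‖) (closedBall 0 ‖z₀‖) z₀) (hz₀ : DifferentiableAt ℂ w z₀)
    (hz₀0 : z₀ ≠ 0) : ‖w z₀‖ ^ 2 ≤ (z₀ * deriv w z₀ * conj (w z₀)).re := by
  set M := ‖w z₀‖
  have hr : 0 < ‖z₀‖ := norm_pos_iff.mpr hz₀0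
  have hmaps : MapsTo w (ball 0 ‖z₀‖) (closedBall (w 0) M) := fun z hz => by
    simpa [hw₀] using isMaxOn_iff.mp hmax z (ball_subset_closedBall hz)
  have hschwarz : ∀ t ∈ Ioo (0 : ℝ) 1, ‖w (t * z₀)‖ ≤ t * M := by
    intro t ht
    have hmem : (t : ℂ) * z₀ ∈ ball 0 ‖z₀‖ := by
      rw [mem_ball_zero_iff, norm_mul, norm_real, Real.norm_of_nonneg ht.1.le]
      nlinarith [ht.2]
    have := dist_le_div_mul_dist_of_mapsTo_ball hw hmaps hmem
    rw [hw₀, dist_zero_right, dist_zero_right, norm_mul, norm_real,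
      Real.norm_of_nonneg ht.1.le] at this
    calc ‖w (t * z₀)‖ ≤ M / ‖z₀‖ * (t * ‖z₀‖) := this
      _ = t * M := by field_simp
  have hγ : HasDerivAt (fun t : ℝ => (t : ℂ) * z₀) z₀ 1 := by
    simpa using (hasDerivAt_id (1 : ℝ)).ofReal_comp.mul_const z₀
  have hw' : HasDerivAt w (deriv w z₀) ((1 : ℝ) * z₀) := by simpa using hz₀.hasDerivAt
  have hu := (hasDerivAt_sq_norm_comp hγ hw').sub
    ((hasDerivAt_pow 2 (1 : ℝ)).const_mul (M ^ 2))
  have := hu.nonneg_of_eventually_le_left <| by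
    filter_upwards [Ioo_mem_nhdsLT (zero_lt_one' ℝ)] with t ht
    have := hschwarz t ht
    simp only [Pi.sub_apply, ofReal_one, one_mul, one_pow, mul_one]
    nlinarith [norm_nonneg (w (t * z₀))]
  simp only [ofReal_one, one_mul, one_pow, Nat.cast_ofNat, mul_one, mul_comm (deriv w z₀)] at this
  linarith

theorem im_mul_deriv_mul_conj_eq_zero (hmax : IsMaxOn (‖w ·‖) (closedBall 0 ‖z₀‖) z₀)
    (hz₀ : DifferentiableAt ℂ w z₀) : (z₀ * deriv w z₀ * conj (w z₀)).im = 0 := by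
  have hγ : HasDerivAt (fun θ : ℝ => exp (θ * I) * z₀) (I * z₀) 0 := by
    simpa using ((hasDerivAt_id (0 : ℝ)).ofReal_comp.mul_const I).cexp.mul_const z₀
  have hw' : HasDerivAt w (deriv w z₀) (exp ((0 : ℝ) * I) * z₀) := by simpa using hz₀.hasDerivAt
  have hu := hasDerivAt_sq_norm_comp hγ hw'
  have hlocal : IsLocalMax (fun θ : ℝ => ‖w (exp (θ * I) * z₀)‖ ^ 2) 0 :=
    Eventually.of_forall fun θ => by
      have := isMaxOn_iff.mp hmax (exp (θ * I) * z₀) (by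
        simp [norm_exp_ofReal_mul_I])
      simpa using pow_le_pow_left₀ (norm_nonneg _) this 2
  have := hlocal.hasDerivAt_eq_zero hu
  simp only [ofReal_zero, zero_mul, exp_zero, one_mul] at this
  have h2 : deriv w z₀ * (I * z₀) * conj (w z₀) = I * (z₀ * deriv w z₀ * conj (w z₀)) := by ring
  rw [h2, I_mul_re] at this
  linarith

theorem exists_one_le_mul_deriv_eq_of_isMaxOn (hw : DifferentiableOn ℂ w (ball 0 ‖z₀‖))
    (hw₀ : w 0 = 0) (hmax : IsMaxOn (‖w ·‖) (closedBall 0 ‖z₀‖) z₀)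
    (hz₀ : DifferentiableAt ℂ w z₀) (hwz₀ : w z₀ ≠ 0) :
    ∃ k : ℝ, 1 ≤ k ∧ z₀ * deriv w z₀ = k * w z₀ := by
  have hz₀0 : z₀ ≠ 0 := by rintro rfl; exact hwz₀ hw₀
  set c := z₀ * deriv w z₀ * conj (w z₀)
  have hM : 0 < ‖w z₀‖ ^ 2 := by positivity
  refine ⟨c.re / ‖w z₀‖ ^ 2, (one_le_div hM).mpr
    (sq_norm_le_re_mul_deriv_mul_conj hw hw₀ hmax hz₀ hz₀0), ?_⟩
  have hc : c = c.re :=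
    Complex.ext (ofReal_re _).symm
      ((im_mul_deriv_mul_conj_eq_zero hmax hz₀).trans (ofReal_im _).symm)
  have hwc : c * w z₀ = z₀ * deriv w z₀ * ‖w z₀‖ ^ 2 := by
    rw [mul_assoc, conj_mul', mul_assoc]
  rw [ofReal_div, div_mul_eq_mul_div, ← hc, hwc, ofReal_pow, mul_div_cancel_right₀]
  exact_mod_cast hM.ne'

end Jack

theorem exists_eq_zero_nonneg_on_closedBall {E : Type*} [NormedAddCommGroup E] [NormedSpace ℝ E]
    [ProperSpace E] {g : E → ℝ} {R : ℝ} (hg : ContinuousOn g (ball 0 R)) (hg₀ : 0 < g 0)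
    {z₁ : E} (hz₁ : z₁ ∈ ball 0 R) (hgz₁ : g z₁ ≤ 0) :
    ∃ z₀ ∈ ball (0 : E) R, g z₀ = 0 ∧ ∀ z ∈ closedBall (0 : E) ‖z₀‖, 0 ≤ g z := by
  have hsub : closedBall (0 : E) ‖z₁‖ ⊆ ball 0 R :=
    closedBall_subset_ball (mem_ball_zero_iff.mp hz₁)
  set S := closedBall (0 : E) ‖z₁‖ ∩ g ⁻¹' Iic 0
  have hS : IsCompact S := (isCompact_closedBall 0 ‖z₁‖).of_isClosed_subset
    ((hg.mono hsub).preimage_isClosed_of_isClosed isClosed_closedBall isClosed_Iic)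
    inter_subset_left
  obtain ⟨z₀, ⟨hz₀S, hgz₀⟩, hmin⟩ :=
    hS.exists_isMinOn ⟨z₁, mem_closedBall_zero_iff.mpr le_rfl, hgz₁⟩
      continuous_norm.continuousOn
  have hz₀ : z₀ ≠ 0 := by rintro rfl; exact (hg₀.trans_le hgz₀).false
  have hpos : ∀ z ∈ ball (0 : E) ‖z₀‖, 0 < g z := by
    intro z hz
    by_contra! hgz
    rw [mem_ball_zero_iff] at hz
    have hzS : z ∈ S := ⟨mem_closedBall_zero_iff.mpr
      (hz.le.trans (mem_closedBall_zero_iff.mp hz₀S)), hgz⟩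
    exact (isMinOn_iff.mp hmin z hzS).not_gt hz
  have hg₀' : ContinuousOn g (closedBall 0 ‖z₀‖) :=
    hg.mono ((closedBall_subset_closedBall (mem_closedBall_zero_iff.mp hz₀S)).trans hsub)
  have hnonneg : ∀ z ∈ closedBall (0 : E) ‖z₀‖, 0 ≤ g z := by
    intro z hz
    refine ContinuousWithinAt.closure_le (by rwa [closure_ball (0 : E) (norm_ne_zero_iff.mpr hz₀)])
      continuousWithinAt_const ((hg₀' z hz).mono ball_subset_closedBall) fun y hy => (hpos y hy).le
  exact ⟨z₀, hsub hz₀S, le_antisymm hgz₀ (hnonneg z₀ (mem_closedBall_zero_iff.mpr le_rfl)),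
    hnonneg⟩

theorem normSq_conj_add_sub_normSq_sub (a q : ℂ) :
    normSq (conj a + q) - normSq (a - q) = 4 * a.re * q.re := by
  simp only [normSq_apply, add_re, add_im, sub_re, sub_im, conj_re, conj_im]
  ring

theorem norm_sub_le_norm_conj_add {a q : ℂ} (ha : 0 ≤ a.re) (hq : 0 ≤ q.re) :
    ‖a - q‖ ≤ ‖conj a + q‖ := by
  rw [norm_def, norm_def]
  gcongr
  linarith [normSq_conj_add_sub_normSq_sub a q, mul_nonneg ha hq]

theorem conj_sub_of_re_eq_zero (a : ℂ) {q : ℂ} (hq : q.re = 0) : conj (a - q) = conj a + q := by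
  apply Complex.ext <;> simp [hq]

theorem exists_one_le_mul_deriv_eq_of_re_nonneg {p : ℂ → ℂ} {R : ℝ} {z₀ : ℂ}
    (hp : DifferentiableOn ℂ p (ball 0 R)) (hz₀ : z₀ ∈ ball 0 R) (hp₀ : 0 < (p 0).re)
    (hre : (p z₀).re = 0) (hnonneg : ∀ z ∈ closedBall (0 : ℂ) ‖z₀‖, 0 ≤ (p z).re) :
    ∃ k : ℝ, 1 ≤ k ∧ z₀ * deriv p z₀ = -k * normSq (p 0 - p z₀) / (2 * (p 0).re) := by
  set a := p 0
  have hsub : closedBall (0 : ℂ) ‖z₀‖ ⊆ ball 0 R :=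
    closedBall_subset_ball (mem_ball_zero_iff.mp hz₀)
  have hden : ∀ z ∈ closedBall (0 : ℂ) ‖z₀‖, conj a + p z ≠ 0 := fun z hz h => by
    have := congrArg re h
    simp only [add_re, conj_re, zero_re] at this
    linarith [hnonneg z hz]
  -- `ζ ↦ (a - ζ) / (conj a + ζ)` maps `{Re ζ ≥ 0}` into the closed unit disk and the imaginary
  -- axis into the unit circle.
  set w := fun z => (a - p z) / (conj a + p z)
  have hwd : DifferentiableOn ℂ w (closedBall 0 ‖z₀‖) :=
    ((differentiableOn_const a).sub (hp.mono hsub)).div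
      ((differentiableOn_const _).add (hp.mono hsub)) hden
  have hz₀mem : z₀ ∈ closedBall (0 : ℂ) ‖z₀‖ := mem_closedBall_zero_iff.mpr le_rfl
  have hpz₀ : HasDerivAt p (deriv p z₀) z₀ :=
    (hp.differentiableAt (isOpen_ball.mem_nhds hz₀)).hasDerivAt
  have hw' : HasDerivAt w (-(2 * a.re) * deriv p z₀ / (conj a + p z₀) ^ 2) z₀ := by
    refine (((hasDerivAt_const z₀ a).sub hpz₀).div ((hasDerivAt_const z₀ (conj a)).add hpz₀)
      (hden z₀ hz₀mem)).congr_deriv ?_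
    have h2re : 2 * (a.re : ℂ) = a + conj a := by rw [add_conj]; push_cast; ring
    simp only [Pi.add_apply, Pi.sub_apply, h2re]
    ring
  have hwz₀ : ‖w z₀‖ = 1 := by
    rw [norm_div, ← norm_conj (a - p z₀), conj_sub_of_re_eq_zero a hre,
      div_self (norm_ne_zero_iff.mpr (hden z₀ hz₀mem))]
  have hmax : IsMaxOn (‖w ·‖) (closedBall 0 ‖z₀‖) z₀ := fun z hz => by
    show ‖w z‖ ≤ ‖w z₀‖
    rw [hwz₀, norm_div, div_le_one (norm_pos_iff.mpr (hden z hz))]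
    exact norm_sub_le_norm_conj_add hp₀.le (hnonneg z hz)
  obtain ⟨k, hk, hkw⟩ := exists_one_le_mul_deriv_eq_of_isMaxOn
    (hwd.mono ball_subset_closedBall) (by simp [w, a]) hmax hw'.differentiableAt
    (norm_ne_zero_iff.mp (hwz₀ ▸ one_ne_zero))
  refine ⟨k, hk, ?_⟩
  rw [hw'.deriv] at hkw
  have hD := hden z₀ hz₀mem
  have ha : (a.re : ℂ) ≠ 0 := ofReal_ne_zero.mpr hp₀.ne'
  rw [← mul_conj, conj_sub_of_re_eq_zero a hre]
  simp only [w] at hkw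
  field_simp at hkw ⊢
  linear_combination -hkw

theorem exists_re_eq_zero_mul_deriv_eq_real {p : ℂ → ℂ} {R : ℝ}
    (hp : DifferentiableOn ℂ p (ball 0 R)) (hp₀ : 0 < (p 0).re) {z₁ : ℂ} (hz₁ : z₁ ∈ ball 0 R)
    (hpz₁ : (p z₁).re ≤ 0) :
    ∃ z₀ ∈ ball (0 : ℂ) R, z₀ ≠ 0 ∧ (p z₀).re = 0 ∧
      ∃ σ : ℝ, σ ≤ -normSq (p 0 - p z₀) / (2 * (p 0).re) ∧ z₀ * deriv p z₀ = σ := by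
  obtain ⟨z₀, hz₀, hre, hnonneg⟩ := exists_eq_zero_nonneg_on_closedBall (g := fun z => (p z).re)
    (continuous_re.comp_continuousOn hp.continuousOn) hp₀ hz₁ hpz₁
  have hz₀0 : z₀ ≠ 0 := by rintro rfl; exact hp₀.ne' hre
  obtain ⟨k, hk, hσ⟩ := exists_one_le_mul_deriv_eq_of_re_nonneg hp hz₀ hp₀ hre hnonneg
  refine ⟨z₀, hz₀, hz₀0, hre, -k * normSq (p 0 - p z₀) / (2 * (p 0).re), ?_, by simp [hσ]⟩
  gcongr
  nlinarith [normSq_nonneg (p 0 - p z₀)]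

theorem exists_differentiableOn_eq_mul_deriv_div {f : ℂ → ℂ} {U : Set ℂ} (hU : IsOpen U)
    (h0 : (0 : ℂ) ∈ U) (hf : DifferentiableOn ℂ f U) (hf₀ : f 0 = 0) (hf'₀ : deriv f 0 ≠ 0)
    (hfne : ∀ z ∈ U, z ≠ 0 → f z ≠ 0) :
    ∃ q : ℂ → ℂ, DifferentiableOn ℂ q U ∧ q 0 = 1 ∧
      ∀ z ∈ U, z ≠ 0 → q z = z * deriv f z / f z := by
  have hslope : ∀ z, z ≠ 0 → dslope f 0 z = f z / z := fun z hz => by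
    rw [dslope_of_ne f hz, slope_def_field, hf₀, sub_zero, sub_zero]
  have hne : ∀ z ∈ U, dslope f 0 z ≠ 0 := fun z hz => by
    rcases eq_or_ne z 0 with rfl | hz0
    · rwa [dslope_same]
    · rw [hslope z hz0]; exact div_ne_zero (hfne z hz hz0) hz0
  refine ⟨fun z => deriv f z / dslope f 0 z, ?_, ?_, fun z hz hz0 => ?_⟩
  · exact (hf.analyticOnNhd hU).deriv.differentiableOn.div
      ((differentiableOn_dslope (hU.mem_nhds h0)).mpr hf) hne
  · simp only [dslope_same]
    exact div_self hf'₀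
  · simp only [hslope z hz0]
    rw [div_div_eq_mul_div, mul_comm]

theorem mul_deriv_mul_deriv_div {f : ℂ → ℂ} {z : ℂ} (hf : DifferentiableAt ℂ f z)
    (hf' : DifferentiableAt ℂ (deriv f) z) (hfz : f z ≠ 0) (hf'z : deriv f z ≠ 0) :
    z * deriv (fun y => y * deriv f y / f y) z =
      z * deriv f z / f z * (1 + z * deriv (deriv f) z / deriv f z - z * deriv f z / f z) := by
  have h : HasDerivAt (fun y => y * deriv f y / f y) _ z :=
    ((hasDerivAt_id' z).mul hf'.hasDerivAt).div hf.hasDerivAt hfz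
  rw [h.deriv]
  simp only [Pi.mul_apply]
  field_simp

theorem div_sub_le_abs_sub_div {c s ρ σ : ℝ} (hc : 0 < c) (hs : 0 ≤ s) (hρ : ρ ≠ 0)
    (hσ : σ ≤ -(1 + 2 * ρ * s + ρ ^ 2) / (2 * c)) :
    c⁻¹ * √(1 + 2 * c) - s / c ≤ |ρ - σ / ρ| := by
  set r := |ρ|
  have hr : 0 < r := abs_pos.mpr hρ
  have hρs : -(r * s) ≤ ρ * s := by nlinarith [neg_abs_le ρ]
  have hσ' : 0 ≤ -σ * (2 * c) - (1 - 2 * r * s + r ^ 2) := by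
    rw [le_div_iff₀ (by positivity)] at hσ
    nlinarith [sq_abs ρ]
  have hS : √(1 + 2 * c) ^ 2 = 1 + 2 * c := Real.sq_sqrt (by positivity)
  calc c⁻¹ * √(1 + 2 * c) - s / c = (√(1 + 2 * c) - s) / c := by ring
    _ ≤ (r ^ 2 - σ) / r := by
      rw [div_le_div_iff₀ hc hr]
      -- AM-GM: `2 r √(1 + 2c) ≤ (1 + 2c) r² + 1`
      nlinarith [sq_nonneg (r * √(1 + 2 * c) - 1)]
    _ ≤ |ρ - σ / ρ| := by
      rcases abs_cases ρ with ⟨hr', -⟩ | ⟨hr', -⟩ <;> rw [show r = _ from hr']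
      · calc (ρ ^ 2 - σ) / ρ = ρ - σ / ρ := by field_simp
          _ ≤ _ := le_abs_self _
      · calc ((-ρ) ^ 2 - σ) / -ρ = -(ρ - σ / ρ) := by field_simp
          _ ≤ _ := neg_le_abs _

theorem one_add_mul_deriv_div_add_eq {f : ℂ → ℂ} {U : Set ℂ} {z a : ℂ} {ρ σ : ℝ}
    (hU : IsOpen U) (hf : DifferentiableOn ℂ f U) (hz : z ∈ U) (hfz : f z ≠ 0)
    (hf'z : deriv f z ≠ 0) (hρ : ρ ≠ 0) (hp : a * (z * deriv f z / f z) = ρ * I)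
    (hσ : a * (z * deriv (fun y => y * deriv f y / f y) z) = σ) :
    1 + z * deriv (deriv f) z / deriv f z + (a - 1) * (z * deriv f z / f z) =
      ((ρ - σ / ρ : ℝ) : ℂ) * I := by
  have hf' : DifferentiableAt ℂ (deriv f) z :=
    (hf.analyticOnNhd hU).deriv.differentiableOn.differentiableAt (hU.mem_nhds hz)
  rw [mul_deriv_mul_deriv_div (hf.differentiableAt (hU.mem_nhds hz)) hf' hfz hf'z, ← mul_assoc,
    hp] at hσ
  have hρ' : (ρ : ℂ) ≠ 0 := ofReal_ne_zero.mpr hρ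
  push_cast
  rw [← hσ, mul_assoc, mul_div_cancel_left₀ _ hρ']
  linear_combination hp +
    (1 + z * deriv (deriv f) z / deriv f z - z * deriv f z / f z) * I_sq

theorem re_exp_neg_mul_I (θ : ℝ) : (exp (-(θ : ℂ) * I)).re = Real.cos θ := by
  rw [← ofReal_neg, exp_ofReal_mul_I_re, Real.cos_neg]

theorem normSq_exp_neg_mul_I_sub (θ ρ : ℝ) :
    normSq (exp (-(θ : ℂ) * I) - ρ * I) = 1 + 2 * ρ * Real.sin θ + ρ ^ 2 := by
  rw [← ofReal_neg, exp_mul_I, ← ofReal_cos, ← ofReal_sin, normSq_apply]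
  simp only [sub_re, sub_im, add_re, add_im, mul_re, mul_im, ofReal_re, ofReal_im, I_re, I_im,
    Real.cos_neg, Real.sin_neg]
  linear_combination Real.cos_sq_add_sin_sq θ

theorem stmt_5 (lam : ℝ) (hlam : lam ∈ Set.Ico (0 : ℝ) (Real.pi / 2))
    (f : ℂ → ℂ) (hanal : DifferentiableOn ℂ f (ball (0 : ℂ) 1))
    (hf0 : f 0 = 0) (hf'0 : deriv f 0 = 1)
    (hfne : ∀ z ∈ ball (0 : ℂ) 1, z ≠ 0 → f z ≠ 0)
    (hf'ne : ∀ z ∈ ball (0 : ℂ) 1, deriv f z ≠ 0)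
    (hslit : ∀ z ∈ ball (0 : ℂ) 1, z ≠ 0 → ∀ A : ℝ,
      (Real.cos lam)⁻¹ * Real.sqrt (1 + 2 * Real.cos lam) - Real.tan lam ≤ |A| →
      1 + z * deriv (deriv f) z / deriv f z +
        (Complex.exp (-(lam : ℂ) * I) - 1) * (z * deriv f z / f z) ≠ A * I) :
    ∀ z ∈ ball (0 : ℂ) 1, z ≠ 0 →
      0 < (Complex.exp (-(lam : ℂ) * I) * (z * deriv f z / f z)).re := by
  intro z hz hz0
  have hcos : 0 < Real.cos lam :=
    Real.cos_pos_of_mem_Ioo ⟨by linarith [Real.pi_pos, hlam.1], hlam.2⟩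
  have hsin : 0 ≤ Real.sin lam :=
    Real.sin_nonneg_of_nonneg_of_le_pi hlam.1 (by linarith [Real.pi_pos, hlam.2])
  set a := exp (-(lam : ℂ) * I)
  obtain ⟨q, hq, hq0, hq_eq⟩ := exists_differentiableOn_eq_mul_deriv_div isOpen_ball
    (mem_ball_self one_pos) hanal hf0 (hf'0 ▸ one_ne_zero) hfne
  by_contra! hneg
  obtain ⟨z₀, hz₀, hz₀0, hre, σ, hσ, hderiv⟩ := exists_re_eq_zero_mul_deriv_eq_real
    (hq.const_mul a) (by rwa [hq0, mul_one, re_exp_neg_mul_I]) hz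
    (by simpa [hq_eq z hz hz0] using hneg)
  set ρ := (a * q z₀).im
  have hρI : a * (z₀ * deriv f z₀ / f z₀) = ρ * I := by
    rw [← hq_eq z₀ hz₀ hz₀0]
    exact Complex.ext (by simpa using hre) (by simp [ρ])
  have hρ : ρ ≠ 0 := fun h => by
    simp [h, a, exp_ne_zero, hz₀0, hf'ne z₀ hz₀, hfne z₀ hz₀ hz₀0] at hρI
  have hqz₀ : q =ᶠ[𝓝 z₀] fun y => y * deriv f y / f y := by
    filter_upwards [isOpen_ball.mem_nhds hz₀, isOpen_ne.mem_nhds hz₀0] with y hy hy0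
    exact hq_eq y hy hy0
  have hσI : a * (z₀ * deriv (fun y => y * deriv f y / f y) z₀) = σ := by
    rw [← hderiv, deriv_const_mul_field, hqz₀.deriv_eq]
    ring
  have hσ' : σ ≤ -(1 + 2 * ρ * Real.sin lam + ρ ^ 2) / (2 * Real.cos lam) := by
    rwa [hq0, mul_one, hq_eq z₀ hz₀ hz₀0, hρI, normSq_exp_neg_mul_I_sub, re_exp_neg_mul_I] at hσ
  refine hslit z₀ hz₀ hz₀0 _ ?_ (one_add_mul_deriv_div_add_eq isOpen_ball hanal hz₀
    (hfne z₀ hz₀ hz₀0) (hf'ne z₀ hz₀) hρ hρI hσI)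
  rw [Real.tan_eq_sin_div_cos]
  exact div_sub_le_abs_sub_div hcos hsin hρ hσ'
end

section
/- Let 0 < λ ≤ 1. Let f be analytic on the open unit disk 𝔻 with f(0) = 0 and f′(0) = 1, suppose Re(f(z)/z) > 0 for all z ∈ 𝔻 \ {0} (with f(z)/z → 1 as z → 0), and suppose |f′(z)·(z/f(z))² − 1| < λ for all z ∈ 𝔻 \ {0}. Set R_λ = ( −(λ + 4) + √(λ² + 12λ + 20) ) / (2(λ+1)). Then for every z with |z| < R_λ, f′(z) ≠ 0 and Re(1 + z f″(z)/f′(z)) > 0; that is, f is convex in |z| < R_λ. -/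
/-!
Write `f z = z * p z` with `p = dslope f 0 ∈ 𝒫`, and `f' = (1 + h) * p ^ 2`, where
`h = f' (z / f) ^ 2 - 1` vanishes at `0` and is bounded by `λ`. Taking logarithmic derivatives,
`1 + z f'' / f' = 1 + z h' / (1 + h) + 2 z p' / p`. The Schwarz and Schwarz–Pick lemmas bound the
middle term by `λ r / (1 - r)`, the Carathéodory estimate
`|p'| ≤ 2 Re p / (1 - r²)` bounds the last one by `4 r / (1 - r²)`, and these add up to less
than `1` exactly when `(1 + λ) r² + (4 + λ) r < 1`, i.e. `r < R_λ`.
-/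

open Complex ComplexConjugate Metric Topology Filter

noncomputable def diskAut (a z : ℂ) : ℂ := (z - a) / (1 - conj a * z)

lemma one_sub_conj_mul_ne_zero {a z : ℂ} (ha : ‖a‖ < 1) (hz : ‖z‖ ≤ 1) :
    1 - conj a * z ≠ 0 := by
  have : ‖conj a * z‖ < 1 := by
    rw [norm_mul, Complex.norm_conj]
    nlinarith [norm_nonneg a, norm_nonneg z]
  intro h
  rw [← sub_eq_zero.mp h, norm_one] at this
  exact this.false

lemma normSq_one_sub_conj_mul_sub_normSq_sub (a z : ℂ) :
    normSq (1 - conj a * z) - normSq (z - a) = (1 - normSq a) * (1 - normSq z) := by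
  simp only [normSq_apply, sub_re, sub_im, mul_re, mul_im, conj_re, conj_im, one_re, one_im]
  ring

lemma norm_diskAut_lt_one {a z : ℂ} (ha : ‖a‖ < 1) (hz : ‖z‖ < 1) : ‖diskAut a z‖ < 1 := by
  have hd := one_sub_conj_mul_ne_zero ha hz.le
  rw [diskAut, norm_div, div_lt_one (norm_pos_iff.mpr hd),
    ← sq_lt_sq₀ (norm_nonneg _) (norm_nonneg _), Complex.sq_norm, Complex.sq_norm, ← sub_pos,
    normSq_one_sub_conj_mul_sub_normSq_sub, ← Complex.sq_norm, ← Complex.sq_norm]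
  have ha2 : ‖a‖ ^ 2 < 1 := by nlinarith [norm_nonneg a]
  have hz2 : ‖z‖ ^ 2 < 1 := by nlinarith [norm_nonneg z]
  exact mul_pos (by linarith) (by linarith)

lemma hasDerivAt_diskAut {a z : ℂ} (hd : 1 - conj a * z ≠ 0) :
    HasDerivAt (diskAut a) ((1 - normSq a) / (1 - conj a * z) ^ 2) z := by
  have hden : HasDerivAt (fun w => 1 - conj a * w) (-conj a) z := by
    simpa using ((hasDerivAt_id z).const_mul (conj a)).const_sub 1
  refine (((hasDerivAt_id z).sub_const a).div hden hd).congr_deriv ?_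
  rw [← mul_conj, id]
  ring

theorem norm_deriv_mul_le_of_mapsTo_unitBall {F : ℂ → ℂ} (hF : DifferentiableOn ℂ F (ball 0 1))
    (hmaps : Set.MapsTo F (ball 0 1) (ball 0 1)) {z : ℂ} (hz : z ∈ ball 0 1) :
    ‖deriv F z‖ * (1 - ‖z‖ ^ 2) ≤ 1 - ‖F z‖ ^ 2 := by
  have hz' : ‖-z‖ < 1 := by simpa using hz
  set a := F z
  have ha : ‖a‖ < 1 := mem_ball_zero_iff.mp (hmaps hz)
  have hinner : Set.MapsTo (diskAut (-z)) (ball 0 1) (ball 0 1) := fun w hw =>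
    mem_ball_zero_iff.mpr (norm_diskAut_lt_one hz' (mem_ball_zero_iff.mp hw))
  set ψ := fun w => diskAut a (F (diskAut (-z) w))
  have hψ : ∀ w ∈ ball (0 : ℂ) 1, HasDerivAt ψ
      ((1 - normSq a) / (1 - conj a * F (diskAut (-z) w)) ^ 2 *
        (deriv F (diskAut (-z) w) * ((1 - normSq (-z)) / (1 - conj (-z) * w) ^ 2))) w := by
    intro w hw
    have hFw := hmaps (hinner hw)
    refine (hasDerivAt_diskAut (one_sub_conj_mul_ne_zero ha (mem_ball_zero_iff.mp hFw).le)).comp w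
      ((hF.differentiableAt (isOpen_ball.mem_nhds (hinner hw))).hasDerivAt.comp w
        (hasDerivAt_diskAut (one_sub_conj_mul_ne_zero hz' (mem_ball_zero_iff.mp hw).le)))
  have hψ0 : ψ 0 = 0 := by simp [ψ, diskAut, a]
  have hψmaps : Set.MapsTo ψ (ball 0 1) (closedBall (ψ 0) 1) := fun w hw => by
    rw [hψ0, mem_closedBall_zero_iff]
    exact (norm_diskAut_lt_one ha (mem_ball_zero_iff.mp (hmaps (hinner hw)))).le
  -- `ψ` maps the disc to itself and fixes `0`, so the Schwarz lemma bounds `‖ψ' 0‖` by `1`.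
  have hSchwarz := Complex.norm_deriv_le_div_of_mapsTo_ball
    (fun w hw => (hψ w hw).differentiableAt.differentiableWithinAt) hψmaps one_pos
  have ha2 : ‖a‖ ^ 2 < 1 := by nlinarith [norm_nonneg a]
  have hψ'0 : deriv ψ 0 = deriv F z * (((1 - ‖z‖ ^ 2) / (1 - ‖a‖ ^ 2) : ℝ) : ℂ) := by
    have hne : (1 : ℂ) - ((‖a‖ ^ 2 : ℝ) : ℂ) ≠ 0 := by exact_mod_cast (sub_pos.mpr ha2).ne'
    rw [(hψ 0 (mem_ball_self one_pos)).deriv]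
    simp only [diskAut, zero_sub, neg_neg, mul_zero, sub_zero, div_one, one_pow, conj_mul',
      normSq_eq_norm_sq, norm_neg, a]
    push_cast
    field_simp
  have hz2 : ‖z‖ ^ 2 < 1 := by nlinarith [norm_nonneg z, mem_ball_zero_iff.mp hz]
  rw [hψ'0, norm_mul, norm_real, Real.norm_of_nonneg (by bound), div_one, mul_div_assoc',
    div_le_one (by linarith)] at hSchwarz
  exact hSchwarz

lemma norm_add_one_sq_sub_norm_sub_one_sq (w : ℂ) : ‖w + 1‖ ^ 2 - ‖w - 1‖ ^ 2 = 4 * w.re := by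
  simp only [Complex.sq_norm, normSq_apply, add_re, add_im, sub_re, sub_im, one_re, one_im]
  ring

theorem norm_deriv_mul_le_of_re_pos {p : ℂ → ℂ} (hp : DifferentiableOn ℂ p (ball 0 1))
    (hre : ∀ w ∈ ball (0 : ℂ) 1, 0 < (p w).re) {z : ℂ} (hz : z ∈ ball 0 1) :
    ‖deriv p z‖ * (1 - ‖z‖ ^ 2) ≤ 2 * (p z).re := by
  have hne : ∀ w ∈ ball (0 : ℂ) 1, p w + 1 ≠ 0 := fun w hw h => by
    have := hre w hw
    rw [eq_neg_of_add_eq_zero_left h] at this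
    norm_num at this
  set ω := fun w => (p w - 1) / (p w + 1)
  have hω : ∀ w ∈ ball (0 : ℂ) 1, HasDerivAt ω (2 * deriv p w / (p w + 1) ^ 2) w := by
    intro w hw
    have hpw := (hp.differentiableAt (isOpen_ball.mem_nhds hw)).hasDerivAt
    refine ((hpw.sub_const 1).div (hpw.add_const 1) (hne w hw)).congr_deriv ?_
    ring
  have hωmaps : Set.MapsTo ω (ball 0 1) (ball 0 1) := fun w hw => by
    rw [mem_ball_zero_iff, norm_div, div_lt_one (norm_pos_iff.mpr (hne w hw)),
      ← sq_lt_sq₀ (norm_nonneg _) (norm_nonneg _)]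
    linarith [norm_add_one_sq_sub_norm_sub_one_sq (p w), hre w hw]
  have hSP := norm_deriv_mul_le_of_mapsTo_unitBall
    (fun w hw => (hω w hw).differentiableAt.differentiableWithinAt) hωmaps hz
  have hN : 0 < ‖p z + 1‖ := norm_pos_iff.mpr (hne z hz)
  rw [(hω z hz).deriv, norm_div, norm_mul, norm_pow, norm_div, Complex.norm_two] at hSP
  field_simp at hSP
  linarith [norm_add_one_sq_sub_norm_sub_one_sq (p z)]

theorem norm_logDeriv_mul_le_of_re_pos {p : ℂ → ℂ} (hp : DifferentiableOn ℂ p (ball 0 1))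
    (hre : ∀ w ∈ ball (0 : ℂ) 1, 0 < (p w).re) {z : ℂ} (hz : z ∈ ball 0 1) :
    ‖logDeriv p z‖ * (1 - ‖z‖ ^ 2) ≤ 2 := by
  have hpz : 0 < ‖p z‖ := norm_pos_iff.mpr (ne_zero_of_re_pos (hre z hz))
  rw [logDeriv_apply, norm_div, div_mul_eq_mul_div, div_le_iff₀ hpz]
  linarith [norm_deriv_mul_le_of_re_pos hp hre hz, re_le_norm (p z)]

theorem norm_logDeriv_one_add_mul_le {h : ℂ → ℂ} {lam : ℝ} (hlam : lam ≤ 1)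
    (hh : DifferentiableOn ℂ h (ball 0 1)) (h0 : h 0 = 0)
    (hlt : ∀ w ∈ ball (0 : ℂ) 1, ‖h w‖ < lam) {z : ℂ} (hz : z ∈ ball 0 1) :
    ‖logDeriv (fun w => 1 + h w) z‖ * (1 - ‖z‖) ≤ lam := by
  have hlam0 : 0 < lam := by simpa [h0] using hlt 0 (mem_ball_self one_pos)
  have hSchwarz : ‖h z‖ ≤ lam * ‖z‖ := by
    have hmaps : Set.MapsTo h (ball 0 1) (closedBall (h 0) lam) := fun w hw =>
      mem_closedBall.mpr (by simpa [h0] using (hlt w hw).le)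
    simpa [h0] using Complex.dist_le_div_mul_dist_of_mapsTo_ball hh hmaps hz
  have hPick : lam * ‖deriv h z‖ * (1 - ‖z‖ ^ 2) ≤ lam ^ 2 - ‖h z‖ ^ 2 := by
    have hmaps : Set.MapsTo (fun w => h w / lam) (ball 0 1) (ball 0 1) := fun w hw => by
      rw [mem_ball_zero_iff, norm_div, norm_real, Real.norm_of_nonneg hlam0.le,
        div_lt_one hlam0]
      exact hlt w hw
    have := norm_deriv_mul_le_of_mapsTo_unitBall (hh.div_const _) hmaps hz
    rw [deriv_div_const, norm_div, norm_div, norm_real, Real.norm_of_nonneg hlam0.le] at this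
    field_simp at this
    linarith
  have ht : ‖h z‖ < 1 := (hlt z hz).trans_le hlam
  have hkey : ‖deriv h z‖ * (1 - ‖z‖) ≤ lam * (1 - ‖h z‖) := by
    refine le_of_mul_le_mul_left ?_ (by positivity : 0 < lam * (1 + ‖z‖))
    calc lam * (1 + ‖z‖) * (‖deriv h z‖ * (1 - ‖z‖))
        = lam * ‖deriv h z‖ * (1 - ‖z‖ ^ 2) := by ring
      _ ≤ (lam - ‖h z‖) * (lam + ‖h z‖) := by linarith
      _ ≤ lam * (1 - ‖h z‖) * (lam * (1 + ‖z‖)) := by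
        apply mul_le_mul <;> nlinarith [norm_nonneg (h z)]
      _ = lam * (1 + ‖z‖) * (lam * (1 - ‖h z‖)) := by ring
  have h1h : 1 - ‖h z‖ ≤ ‖1 + h z‖ := by simpa using norm_sub_norm_le (1 : ℂ) (-h z)
  rw [logDeriv_apply, deriv_const_add, norm_div, div_mul_eq_mul_div,
    div_le_iff₀ (by linarith)]
  exact hkey.trans (by gcongr)

lemma one_add_ne_zero_of_norm_lt_one {R : Type*} [NormedRing R] [NormOneClass R] {w : R}
    (hw : ‖w‖ < 1) : 1 + w ≠ 0 := fun h => by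
  rw [eq_neg_of_add_eq_zero_right h, norm_neg, norm_one] at hw
  exact hw.false

theorem re_one_add_mul_logDeriv_pos {p h : ℂ → ℂ} {lam : ℝ} (hlam : lam ≤ 1)
    (hp : DifferentiableOn ℂ p (ball 0 1)) (hre : ∀ w ∈ ball (0 : ℂ) 1, 0 < (p w).re)
    (hh : DifferentiableOn ℂ h (ball 0 1)) (h0 : h 0 = 0)
    (hlt : ∀ w ∈ ball (0 : ℂ) 1, ‖h w‖ < lam) {z : ℂ}
    (hz : (1 + lam) * ‖z‖ ^ 2 + (4 + lam) * ‖z‖ < 1) :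
    0 < (1 + z * logDeriv (fun w => (1 + h w) * p w ^ 2) z).re := by
  have hlam0 : 0 < lam := by simpa [h0] using hlt 0 (mem_ball_self one_pos)
  have hr0 := norm_nonneg z
  have hr1 : ‖z‖ < 1 := by nlinarith
  have hz1 : z ∈ ball (0 : ℂ) 1 := mem_ball_zero_iff.mpr hr1
  have hhd := hh.differentiableAt (isOpen_ball.mem_nhds hz1)
  have hpd := hp.differentiableAt (isOpen_ball.mem_nhds hz1)
  have hhz : 1 + h z ≠ 0 := one_add_ne_zero_of_norm_lt_one ((hlt z hz1).trans_le hlam)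
  have hpz : p z ^ 2 ≠ 0 := pow_ne_zero 2 (ne_zero_of_re_pos (hre z hz1))
  rw [logDeriv_mul (f := fun w => 1 + h w) (g := fun w => p w ^ 2) z hhz hpz
    (hhd.const_add 1) (hpd.pow 2), logDeriv_fun_pow hpd, Nat.cast_ofNat]
  set A := logDeriv (fun w => 1 + h w) z
  set B := logDeriv p z
  have hA : ‖A‖ * (1 - ‖z‖) ≤ lam := norm_logDeriv_one_add_mul_le hlam hh h0 hlt hz1
  have hB : ‖B‖ * (1 - ‖z‖ ^ 2) ≤ 2 := norm_logDeriv_mul_le_of_re_pos hp hre hz1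
  have hsum : ‖z‖ * ‖A‖ + 2 * ‖z‖ * ‖B‖ < 1 := by
    refine lt_of_mul_lt_mul_right ?_ (by nlinarith : (0 : ℝ) ≤ 1 - ‖z‖ ^ 2)
    calc (‖z‖ * ‖A‖ + 2 * ‖z‖ * ‖B‖) * (1 - ‖z‖ ^ 2)
        = ‖z‖ * (1 + ‖z‖) * (‖A‖ * (1 - ‖z‖)) + 2 * ‖z‖ * (‖B‖ * (1 - ‖z‖ ^ 2)) := by ring
      _ ≤ ‖z‖ * (1 + ‖z‖) * lam + 2 * ‖z‖ * 2 := by gcongr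
      _ < 1 * (1 - ‖z‖ ^ 2) := by linarith
  calc 0 < 1 - (‖z‖ * ‖A‖ + 2 * ‖z‖ * ‖B‖) := by linarith
    _ ≤ 1 - ‖z * (A + 2 * B)‖ := by
      gcongr
      calc ‖z * (A + 2 * B)‖ ≤ ‖z‖ * (‖A‖ + ‖2 * B‖) := by
            rw [norm_mul]; gcongr; exact norm_add_le _ _
        _ = ‖z‖ * ‖A‖ + 2 * ‖z‖ * ‖B‖ := by rw [norm_mul, Complex.norm_two]; ring
    _ ≤ (1 + z * (A + 2 * B)).re := by
      rw [add_re, one_re]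
      linarith [neg_le_of_abs_le (abs_re_le_norm (z * (A + 2 * B)))]

-- `R_λ` is the positive root of `(1 + λ) R ^ 2 + (4 + λ) R = 1`.
noncomputable def convexityRadius (lam : ℝ) : ℝ :=
  (-(lam + 4) + √(lam ^ 2 + 12 * lam + 20)) / (2 * (lam + 1))

lemma quadratic_lt_one_of_lt_convexityRadius {lam r : ℝ} (hlam : -1 < lam) (hr : 0 ≤ r)
    (hrR : r < convexityRadius lam) : (1 + lam) * r ^ 2 + (4 + lam) * r < 1 := by
  have hS := Real.sq_sqrt (by nlinarith : (0 : ℝ) ≤ lam ^ 2 + 12 * lam + 20)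
  rw [convexityRadius, lt_div_iff₀ (by linarith)] at hrR
  have := mul_self_lt_mul_self (by nlinarith) (by linarith : 2 * (lam + 1) * r + (lam + 4) <
    √(lam ^ 2 + 12 * lam + 20))
  nlinarith

lemma dslope_zero_of_ne {f : ℂ → ℂ} (hf0 : f 0 = 0) {w : ℂ} (hw : w ≠ 0) :
    dslope f 0 w = f w / w := by
  rw [dslope_of_ne _ hw, slope_def_field, hf0, sub_zero, sub_zero]

lemma re_dslope_zero_pos {f : ℂ → ℂ} (hf0 : f 0 = 0) (hf'0 : deriv f 0 = 1)
    (hP : ∀ z ∈ ball (0 : ℂ) 1, z ≠ 0 → 0 < (f z / z).re) :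
    ∀ w ∈ ball (0 : ℂ) 1, 0 < (dslope f 0 w).re := by
  intro w hw
  rcases eq_or_ne w 0 with rfl | hne
  · simp [dslope_same, hf'0]
  · exact dslope_zero_of_ne hf0 hne ▸ hP w hw hne

lemma norm_deriv_div_dslope_zero_sq_sub_one_lt {f : ℂ → ℂ} {lam : ℝ} (hlam : 0 < lam)
    (hf0 : f 0 = 0) (hf'0 : deriv f 0 = 1)
    (hU : ∀ z ∈ ball (0 : ℂ) 1, z ≠ 0 → ‖deriv f z * (z / f z) ^ 2 - 1‖ < lam) :
    ∀ w ∈ ball (0 : ℂ) 1, ‖deriv f w / dslope f 0 w ^ 2 - 1‖ < lam := by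
  intro w hw
  rcases eq_or_ne w 0 with rfl | hne
  · simpa [dslope_same, hf'0] using hlam
  · rw [dslope_zero_of_ne hf0 hne, ← inv_div w, inv_pow, div_inv_eq_mul]
    exact hU w hw hne

theorem stmt_19 (lam : ℝ) (hlam : lam ∈ Set.Ioc (0 : ℝ) 1)
    (f : ℂ → ℂ) (hanal : DifferentiableOn ℂ f (ball (0 : ℂ) 1))
    (hf0 : f 0 = 0) (hf'0 : deriv f 0 = 1)
    (hP : ∀ z ∈ ball (0 : ℂ) 1, z ≠ 0 → 0 < (f z / z).re)
    (hU : ∀ z ∈ ball (0 : ℂ) 1, z ≠ 0 →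
      ‖deriv f z * (z / f z) ^ 2 - 1‖ < lam)
    (R : ℝ)
    (hR : R = (-(lam + 4) + Real.sqrt (lam ^ 2 + 12 * lam + 20)) / (2 * (lam + 1))) :
    ∀ z : ℂ, ‖z‖ < R →
      deriv f z ≠ 0 ∧ 0 < (1 + z * deriv (deriv f) z / deriv f z).re := by
  obtain ⟨hlam0, hlam1⟩ := hlam
  intro z hzR
  have hquad := quadratic_lt_one_of_lt_convexityRadius (by linarith) (norm_nonneg z) (hR ▸ hzR)
  have hz1 : z ∈ ball (0 : ℂ) 1 := mem_ball_zero_iff.mpr (by nlinarith [norm_nonneg z])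
  set p := dslope f 0
  set h := fun w => deriv f w / p w ^ 2 - 1
  have hp : DifferentiableOn ℂ p (ball 0 1) :=
    (differentiableOn_dslope (ball_mem_nhds 0 one_pos)).2 hanal
  have hre := re_dslope_zero_pos hf0 hf'0 hP
  have hpne : ∀ w ∈ ball (0 : ℂ) 1, p w ^ 2 ≠ 0 := fun w hw =>
    pow_ne_zero 2 (ne_zero_of_re_pos (hre w hw))
  have hh : DifferentiableOn ℂ h (ball 0 1) :=
    ((hanal.deriv isOpen_ball).div (hp.pow 2) hpne).sub_const 1
  have hlt := norm_deriv_div_dslope_zero_sq_sub_one_lt hlam0 hf0 hf'0 hU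
  have hfactor : deriv f =ᶠ[𝓝 z] fun w => (1 + h w) * p w ^ 2 :=
    eventually_of_mem (isOpen_ball.mem_nhds hz1) fun w hw => by
      simp only [h, add_sub_cancel, div_mul_cancel₀ _ (hpne w hw)]
  refine ⟨?_, ?_⟩
  · rw [hfactor.eq_of_nhds]
    exact mul_ne_zero (one_add_ne_zero_of_norm_lt_one ((hlt z hz1).trans_le hlam1)) (hpne z hz1)
  · have h0 : h 0 = 0 := by simp [h, p, dslope_same, hf'0]
    have := re_one_add_mul_logDeriv_pos hlam1 hp hre hh h0 hlt hquad
    rwa [← (logDeriv_congr_nhds hfactor).eq_of_nhds, logDeriv_apply, ← mul_div_assoc] at this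
end
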